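/- Let α, β ∈ ℝ. The sum Ẑ_{α,β,G} := 2 Σ_{ξ ∈ ℤ₊ⁿ} |{i : ξᵢ > 0}| · e^{W(ξ)} is finite if and only if α < 0 and α + β λ₁(G) < 0. Equivalently, the function ξ ↦ |{i : ξᵢ > 0}| e^{W(ξ)} on ℤ₊ⁿ is summable if and only if α < 0 and α + β λ₁(G) < 0. -/

import Mathlib

/-!
Viewing `ξ` as a real vector `x`, `W(ξ) = (α/2)⟪x, x⟫ - (α/2) ∑ᵢ xᵢ + (β/2)⟪x, A x⟫`. Since
`λ₁ • 1 - A` is positive semidefinite, `⟪x, A x⟫ ≤ λ₁ ⟪x, x⟫`, and `⟪x, A x⟫ ≥ 0` for `x ≥ 0`.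
So if `α < 0` and `α + βλ₁ < 0`, the summand is at most `n ∏ᵢ exp(c ξᵢ² / 2 - α ξᵢ / 2)` with
`c = α + max β 0 · λ₁ < 0`, a product of summable sequences.

Conversely, the summand is `≥ 1` along an injective sequence, so it does not tend to `0`: along
`ξ = k eᵢ` if `α ≥ 0`; and if `α < 0 ≤ α + βλ₁`, along the lattice points `⌊t u⌋` for a nonnegative
eigenvector `u` of `λ₁` (the absolute value of any eigenvector, by positive semidefiniteness).
There the form of `λ₁ • 1 - A` stays bounded, so `W ≥ -(α/2) ∑ᵢ xᵢ - O(1) → ∞`.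
-/

open Finset Real

/-- `W(ξ) = (α/2) Σᵢ ξᵢ(ξᵢ−1) + β Σ_{edges i∼j} ξᵢξⱼ`, with the edge sum written as half
the double sum over the entries of the adjacency matrix (each edge is counted twice). -/
noncomputable def W {n : ℕ} (G : SimpleGraph (Fin n)) [DecidableRel G.Adj]
    (α β : ℝ) (ξ : Fin n → ℕ) : ℝ :=
  α / 2 * ∑ i, (ξ i : ℝ) * ((ξ i : ℝ) - 1)
    + β / 2 * ∑ i, ∑ j, G.adjMatrix ℝ i j * (ξ i : ℝ) * (ξ j : ℝ)

open Matrix Filter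

namespace Matrix

lemma isHermitian_smul_one_sub {ι : Type*} [DecidableEq ι] {A : Matrix ι ι ℝ}
    (hA : A.IsHermitian) (lam : ℝ) : (lam • 1 - A).IsHermitian :=
  (isHermitian_one.smul (IsSelfAdjoint.all lam)).sub hA

variable {ι : Type*} [Fintype ι] {A M : Matrix ι ι ℝ} {lam : ℝ}

def eigenvalueSet (A : Matrix ι ι ℝ) : Set ℝ :=
  {μ | ∃ v : ι → ℝ, v ≠ 0 ∧ A *ᵥ v = μ • v}

lemma dotProduct_mulVec_nonneg_of_nonneg (hA : ∀ i j, 0 ≤ A i j) {x : ι → ℝ} (hx : 0 ≤ x) :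
    0 ≤ x ⬝ᵥ A *ᵥ x :=
  Finset.sum_nonneg fun i _ => mul_nonneg (hx i) <|
    Finset.sum_nonneg fun j _ => mul_nonneg (hA i j) (hx j)

lemma dotProduct_mulVec_le_abs (hA : ∀ i j, 0 ≤ A i j) (v : ι → ℝ) :
    v ⬝ᵥ A *ᵥ v ≤ |v| ⬝ᵥ A *ᵥ |v| := by
  simp only [dotProduct, mulVec, Finset.mul_sum, Pi.abs_apply]
  refine Finset.sum_le_sum fun i _ => Finset.sum_le_sum fun j _ => ?_
  calc v i * (A i j * v j) ≤ |v i * (A i j * v j)| := le_abs_self _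
    _ = |v i| * (A i j * |v j|) := by rw [abs_mul, abs_mul, abs_of_nonneg (hA i j)]

lemma abs_dotProduct_mulVec_le_sum_abs {x : ι → ℝ} (hx : ∀ i, |x i| ≤ 1) :
    |x ⬝ᵥ M *ᵥ x| ≤ ∑ i, ∑ j, |M i j| := by
  simp only [dotProduct, mulVec, Finset.mul_sum]
  refine (Finset.abs_sum_le_sum_abs _ _).trans <| Finset.sum_le_sum fun i _ =>
    (Finset.abs_sum_le_sum_abs _ _).trans <| Finset.sum_le_sum fun j _ => ?_
  rw [abs_mul, abs_mul, mul_left_comm]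
  exact mul_le_of_le_one_right (abs_nonneg _) (mul_le_one₀ (hx i) (abs_nonneg _) (hx j))

lemma dotProduct_mulVec_sub_of_mulVec_eq_zero (hM : M.IsSymm) {y : ι → ℝ} (hy : M *ᵥ y = 0)
    (ε : ι → ℝ) : (y - ε) ⬝ᵥ M *ᵥ (y - ε) = ε ⬝ᵥ M *ᵥ ε := by
  have hyM : y ⬝ᵥ M *ᵥ ε = 0 := by
    rw [dotProduct_mulVec, ← hM.eq, vecMul_transpose, hy, zero_dotProduct]
  rw [mulVec_sub, hy, zero_sub, dotProduct_neg, sub_dotProduct, hyM]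
  ring

variable [DecidableEq ι]

lemma dotProduct_smul_one_sub_mulVec (x : ι → ℝ) :
    x ⬝ᵥ (lam • 1 - A) *ᵥ x = lam * (x ⬝ᵥ x) - x ⬝ᵥ A *ᵥ x := by
  rw [sub_mulVec, smul_mulVec, one_mulVec, dotProduct_sub, dotProduct_smul, smul_eq_mul]

lemma posSemidef_smul_one_sub (hA : A.IsHermitian) (hlam : lam ∈ upperBounds A.eigenvalueSet) :
    (lam • 1 - A).PosSemidef := by
  have hM := isHermitian_smul_one_sub hA lam
  refine hM.posSemidef_iff_eigenvalues_nonneg.mpr fun i => ?_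
  set v : ι → ℝ := ⇑(hM.eigenvectorBasis i)
  have hv : v ≠ 0 := (WithLp.ofLp_eq_zero 2).ne.2 (hM.eigenvectorBasis.orthonormal.ne_zero i)
  have hAv : A *ᵥ v = (lam - hM.eigenvalues i) • v := by
    have := hM.mulVec_eigenvectorBasis i
    rw [sub_mulVec, smul_mulVec, one_mulVec] at this
    rw [sub_smul, ← this, sub_sub_cancel]
  simpa using hlam ⟨v, hv, hAv⟩

lemma dotProduct_mulVec_le_of_posSemidef (h : (lam • 1 - A).PosSemidef) (x : ι → ℝ) :
    x ⬝ᵥ A *ᵥ x ≤ lam * (x ⬝ᵥ x) := by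
  have := h.dotProduct_mulVec_nonneg x
  rw [star_trivial, dotProduct_smul_one_sub_mulVec] at this
  linarith

lemma exists_nonneg_eigenvector (hA : A.IsHermitian) (hA0 : ∀ i j, 0 ≤ A i j)
    (hlam : IsGreatest A.eigenvalueSet lam) :
    ∃ w : ι → ℝ, w ≠ 0 ∧ 0 ≤ w ∧ A *ᵥ w = lam • w := by
  obtain ⟨v, hv, hAv⟩ := hlam.1
  have hM := posSemidef_smul_one_sub hA hlam.2
  -- The form of `lam • 1 - A` is `≥ 0`, vanishes at `v` and does not grow under `v ↦ |v|`;
  -- a positive semidefinite form vanishes only on the kernel.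
  have hq : |v| ⬝ᵥ (lam • 1 - A) *ᵥ |v| = 0 := by
    refine le_antisymm ?_ (by simpa using hM.dotProduct_mulVec_nonneg |v|)
    have hvv : |v| ⬝ᵥ |v| = v ⬝ᵥ v := by simp [dotProduct, Pi.abs_apply, abs_mul_abs_self]
    have := dotProduct_mulVec_le_abs hA0 v
    rw [hAv, dotProduct_smul, smul_eq_mul] at this
    rw [dotProduct_smul_one_sub_mulVec, hvv]
    linarith
  have hker := (hM.dotProduct_mulVec_zero_iff |v|).1 (by simpa using hq)
  refine ⟨|v|, fun h => hv (funext fun i => abs_eq_zero.1 (congrFun h i)), abs_nonneg v, ?_⟩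
  rwa [sub_mulVec, smul_mulVec, one_mulVec, sub_eq_zero, eq_comm] at hker

end Matrix

lemma summable_exp_quadratic {c : ℝ} (hc : c < 0) (d : ℝ) :
    Summable fun k : ℕ => exp (c * k ^ 2 + d * k) := by
  refine Summable.of_norm_bounded_eventually_nat (g := fun k : ℕ => exp (-1) ^ k)
    (summable_geometric_of_lt_one (exp_nonneg _) (exp_lt_one_iff.2 (by norm_num))) ?_
  filter_upwards [eventually_ge_atTop ⌈(d + 1) / -c⌉₊] with k hk
  have hk' : (d + 1) / -c ≤ k := (Nat.le_ceil _).trans (by exact_mod_cast hk)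
  rw [div_le_iff₀ (neg_pos.2 hc)] at hk'
  rw [norm_of_nonneg (exp_nonneg _), ← exp_nat_mul, exp_le_exp]
  nlinarith [(Nat.cast_nonneg k : (0 : ℝ) ≤ k)]

lemma summable_pi_prod_of_nonneg {ι κ : Type*} [Fintype ι] {f : κ → ℝ}
    (hf0 : 0 ≤ f) (hf : Summable f) : Summable fun ξ : ι → κ => ∏ i, f (ξ i) := by
  classical
  refine summable_of_sum_le (c := ∏ _ : ι, ∑' k, f k)
    (fun ξ => Finset.prod_nonneg fun i _ => hf0 _) fun s => ?_
  calc ∑ ξ ∈ s, ∏ i, f (ξ i)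
      ≤ ∑ ξ ∈ Fintype.piFinset fun i => s.image (· i), ∏ i, f (ξ i) :=
        Finset.sum_le_sum_of_subset_of_nonneg
          (fun ξ hξ => Fintype.mem_piFinset.2 fun i => Finset.mem_image_of_mem _ hξ)
          fun ξ _ _ => Finset.prod_nonneg fun i _ => hf0 _
    _ = ∏ i, ∑ k ∈ s.image (· i), f k := (Finset.prod_univ_sum _ _).symm
    _ ≤ ∏ _ : ι, ∑' k, f k :=
        Finset.prod_le_prod (fun i _ => Finset.sum_nonneg fun k _ => hf0 k)
          fun i _ => hf.sum_le_tsum _ fun k _ => hf0 k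

lemma not_summable_of_one_le_comp {κ : Type*} {f : κ → ℝ} {s : ℕ → κ} (hs : s.Injective)
    (h : ∀ᶠ t in atTop, 1 ≤ f (s t)) : ¬ Summable f := fun hf => by
  have := ge_of_tendsto (hf.comp_injective hs).tendsto_atTop_zero h
  norm_num at this

lemma SimpleGraph.adjMatrix_nonneg {V : Type*} (G : SimpleGraph V) [DecidableRel G.Adj]
    (i j : V) : 0 ≤ G.adjMatrix ℝ i j := by
  rw [SimpleGraph.adjMatrix_apply]
  split_ifs <;> norm_num

section Summand

variable {n : ℕ} (G : SimpleGraph (Fin n)) [DecidableRel G.Adj] {α β lam : ℝ}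

/-- The summand of `Ẑ_{α,β,G}`, without the factor `2`. -/
noncomputable def zTerm (α β : ℝ) (ξ : Fin n → ℕ) : ℝ :=
  ((Finset.univ.filter (fun i => 0 < ξ i)).card : ℝ) * exp (W G α β ξ)

lemma W_eq_dotProduct (α β : ℝ) (ξ : Fin n → ℕ) :
    W G α β ξ = α / 2 * ((fun i => (ξ i : ℝ)) ⬝ᵥ fun i => (ξ i : ℝ)) - α / 2 * ∑ i, (ξ i : ℝ)
      + β / 2 * ((fun i => (ξ i : ℝ)) ⬝ᵥ G.adjMatrix ℝ *ᵥ fun i => (ξ i : ℝ)) := by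
  have hdiag : ∑ i, (ξ i : ℝ) * ((ξ i : ℝ) - 1)
      = ((fun i => (ξ i : ℝ)) ⬝ᵥ fun i => (ξ i : ℝ)) - ∑ i, (ξ i : ℝ) := by
    simp only [dotProduct, mul_sub_one, Finset.sum_sub_distrib]
  have hedges : ∑ i, ∑ j, G.adjMatrix ℝ i j * (ξ i : ℝ) * (ξ j : ℝ)
      = (fun i => (ξ i : ℝ)) ⬝ᵥ G.adjMatrix ℝ *ᵥ fun i => (ξ i : ℝ) := by
    simp only [dotProduct, mulVec, Finset.mul_sum]
    exact Finset.sum_congr rfl fun i _ => Finset.sum_congr rfl fun j _ => by ring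
  rw [W, hdiag, hedges]
  ring

lemma W_le_sum (hlam : lam ∈ upperBounds (G.adjMatrix ℝ).eigenvalueSet) (ξ : Fin n → ℕ) :
    W G α β ξ ≤ ∑ i, ((α + max β 0 * lam) / 2 * (ξ i : ℝ) ^ 2 + -α / 2 * ξ i) := by
  set x : Fin n → ℝ := fun i => (ξ i : ℝ)
  have hquad : β * (x ⬝ᵥ G.adjMatrix ℝ *ᵥ x) ≤ max β 0 * lam * (x ⬝ᵥ x) := by
    rcases le_total β 0 with hβ | hβ
    · rw [max_eq_right hβ, zero_mul, zero_mul]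
      exact mul_nonpos_of_nonpos_of_nonneg hβ <| dotProduct_mulVec_nonneg_of_nonneg
        G.adjMatrix_nonneg fun i => Nat.cast_nonneg (ξ i)
    · rw [max_eq_left hβ, mul_assoc]
      exact mul_le_mul_of_nonneg_left (dotProduct_mulVec_le_of_posSemidef
        (posSemidef_smul_one_sub (G.isHermitian_adjMatrix ℝ) hlam) x) hβ
  have hsum : ∑ i, ((α + max β 0 * lam) / 2 * (ξ i : ℝ) ^ 2 + -α / 2 * ξ i)
      = (α + max β 0 * lam) / 2 * (x ⬝ᵥ x) + -α / 2 * ∑ i, x i := by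
    simp only [Finset.sum_add_distrib, ← Finset.mul_sum, dotProduct, sq, x]
  rw [W_eq_dotProduct, hsum]
  linarith

lemma W_single (α β : ℝ) (i : Fin n) (k : ℕ) :
    W G α β (Pi.single i k) = α / 2 * (k * (k - 1)) := by
  have hcast : (fun j => ((Pi.single i k : Fin n → ℕ) j : ℝ)) = Pi.single i (k : ℝ) := by
    ext j
    rcases eq_or_ne j i with rfl | hj <;> simp [*]
  rw [W_eq_dotProduct, hcast]
  simp only [single_dotProduct, dotProduct_single, Pi.single_eq_same, mulVec_single,
    Finset.sum_pi_single', Finset.mem_univ, if_true, Pi.smul_apply, col_apply,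
    G.adjMatrix_apply, G.irrefl, if_false, smul_zero]
  ring

lemma le_W_floor_smul (hγ : 0 ≤ α + β * lam) {u : Fin n → ℝ} (hu : 0 ≤ u)
    (hAu : G.adjMatrix ℝ *ᵥ u = lam • u) (t : ℕ) :
    -α / 2 * ∑ i, (⌊t * u i⌋₊ : ℝ) - |β| / 2 * ∑ i, ∑ j, |(lam • 1 - G.adjMatrix ℝ) i j|
      ≤ W G α β fun i => ⌊t * u i⌋₊ := by
  set M := lam • 1 - G.adjMatrix ℝ
  set x : Fin n → ℝ := fun i => (⌊t * u i⌋₊ : ℝ)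
  set ε := (t : ℝ) • u - x
  have hε : ∀ i, |ε i| ≤ 1 := fun i => by
    have h0 := Nat.floor_le (mul_nonneg (Nat.cast_nonneg t) (hu i))
    have h1 := Nat.lt_floor_add_one ((t : ℝ) * u i)
    rw [abs_le]
    constructor <;> simp only [ε, x, Pi.sub_apply, Pi.smul_apply, smul_eq_mul] <;> linarith
  have hMu : M *ᵥ ((t : ℝ) • u) = 0 := by
    rw [mulVec_smul, sub_mulVec, smul_mulVec, one_mulVec, hAu, sub_self, smul_zero]
  -- `x` lies within distance one of the kernel vector `t • u` of `M`.
  have hxMx : |x ⬝ᵥ M *ᵥ x| ≤ ∑ i, ∑ j, |M i j| := by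
    have hM : M.IsSymm :=
      isHermitian_iff_isSymm.1 (isHermitian_smul_one_sub (G.isHermitian_adjMatrix ℝ) lam)
    have := dotProduct_mulVec_sub_of_mulVec_eq_zero hM hMu ε
    rw [sub_sub_cancel] at this
    rw [this]
    exact abs_dotProduct_mulVec_le_sum_abs hε
  have hβ : β * (x ⬝ᵥ M *ᵥ x) ≤ |β| * ∑ i, ∑ j, |M i j| :=
    (le_abs_self _).trans (by rw [abs_mul]; exact mul_le_mul_of_nonneg_left hxMx (abs_nonneg β))
  have hxx : 0 ≤ x ⬝ᵥ x := Finset.sum_nonneg fun i _ => mul_self_nonneg _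
  have hxAx : x ⬝ᵥ G.adjMatrix ℝ *ᵥ x = lam * (x ⬝ᵥ x) - x ⬝ᵥ M *ᵥ x := by
    rw [dotProduct_smul_one_sub_mulVec]
    ring
  have hW : W G α β (fun i => ⌊t * u i⌋₊)
      = α / 2 * (x ⬝ᵥ x) - α / 2 * ∑ i, x i + β / 2 * (x ⬝ᵥ G.adjMatrix ℝ *ᵥ x) :=
    W_eq_dotProduct G α β _
  rw [hW, hxAx]
  linarith [mul_nonneg hγ hxx]

lemma one_le_zTerm {ξ : Fin n → ℕ} {i : Fin n} (hi : 0 < ξ i) (hW : 0 ≤ W G α β ξ) :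
    1 ≤ zTerm G α β ξ := by
  have hcard : 1 ≤ ((Finset.univ.filter (fun i => 0 < ξ i)).card : ℝ) := by
    exact_mod_cast Finset.card_pos.2 ⟨i, Finset.mem_filter.2 ⟨Finset.mem_univ i, hi⟩⟩
  unfold zTerm
  nlinarith [one_le_exp hW]

lemma summable_zTerm (hlam : lam ∈ upperBounds (G.adjMatrix ℝ).eigenvalueSet)
    (hα : α < 0) (hγ : α + β * lam < 0) : Summable (zTerm G α β) := by
  set c := α + max β 0 * lam
  have hc : c < 0 := by
    rcases le_total β 0 with hβ | hβ
    · simpa [c, max_eq_right hβ] using hα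
    · simpa [c, max_eq_left hβ] using hγ
  set f : ℕ → ℝ := fun k => exp (c / 2 * k ^ 2 + -α / 2 * k)
  have hf : Summable fun ξ : Fin n → ℕ => (n : ℝ) * ∏ i, f (ξ i) :=
    (summable_pi_prod_of_nonneg (fun k => exp_nonneg _)
      (summable_exp_quadratic (by linarith) _)).mul_left _
  refine hf.of_nonneg_of_le (fun ξ => mul_nonneg (Nat.cast_nonneg _) (exp_nonneg _)) fun ξ => ?_
  have hcard : ((Finset.univ.filter (fun i => 0 < ξ i)).card : ℝ) ≤ n := by
    exact_mod_cast (Finset.card_filter_le _ _).trans (Finset.card_fin n).le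
  have hexp : exp (W G α β ξ) ≤ ∏ i, f (ξ i) := by
    rw [← exp_sum]
    exact exp_le_exp.2 (W_le_sum G hlam ξ)
  exact mul_le_mul hcard hexp (exp_nonneg _) (Nat.cast_nonneg n)

lemma not_summable_zTerm_of_nonneg (hα : 0 ≤ α) (β : ℝ) (i : Fin n) :
    ¬ Summable (zTerm G α β) := by
  refine not_summable_of_one_le_comp (s := fun k => Pi.single i (k + 1))
    (fun a b h => by simpa using congrFun h i) (Eventually.of_forall fun k => ?_)
  refine one_le_zTerm G (i := i) (by simp) ?_
  rw [W_single, Nat.cast_succ, add_sub_cancel_right]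
  positivity

lemma not_summable_zTerm_of_nonneg_add (hlam : IsGreatest (G.adjMatrix ℝ).eigenvalueSet lam)
    (hα : α < 0) (hγ : 0 ≤ α + β * lam) : ¬ Summable (zTerm G α β) := by
  obtain ⟨w, hw, hw0, hAw⟩ :=
    exists_nonneg_eigenvector (G.isHermitian_adjMatrix ℝ) G.adjMatrix_nonneg hlam
  obtain ⟨i₀, hi₀⟩ : ∃ i, 0 < w i := by
    obtain ⟨i, hi⟩ := Function.ne_iff.1 hw
    exact ⟨i, (hw0 i).lt_of_ne' hi⟩
  set u := (w i₀)⁻¹ • w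
  have hu0 : 0 ≤ u := smul_nonneg (inv_nonneg.2 hi₀.le) hw0
  have hAu : G.adjMatrix ℝ *ᵥ u = lam • u := by rw [mulVec_smul, hAw, smul_comm]
  have hsi₀ (t : ℕ) : ⌊t * u i₀⌋₊ = t := by simp [u, inv_mul_cancel₀ hi₀.ne']
  set C := ∑ i, ∑ j, |(lam • 1 - G.adjMatrix ℝ) i j|
  refine not_summable_of_one_le_comp (s := fun (t : ℕ) i => ⌊t * u i⌋₊)
    (fun a b h => by simpa [hsi₀] using congrFun h i₀) ?_
  filter_upwards [eventually_ge_atTop (max 1 ⌈|β| * C / -α⌉₊)] with t ht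
  rw [max_le_iff, Nat.ceil_le, div_le_iff₀ (neg_pos.2 hα)] at ht
  have hsum : (t : ℝ) ≤ ∑ i, (⌊t * u i⌋₊ : ℝ) := by
    simpa [hsi₀] using Finset.single_le_sum (fun i _ => Nat.cast_nonneg (⌊t * u i⌋₊))
      (Finset.mem_univ i₀)
  refine one_le_zTerm G (i := i₀) (by rw [hsi₀]; exact ht.1) ?_
  nlinarith [le_W_floor_smul G hγ hu0 hAu t]

end Summand

theorem stmt3_general {n : ℕ} (G : SimpleGraph (Fin n)) [DecidableRel G.Adj]
    (α β : ℝ) (lam1 : ℝ)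
    (hlam : IsGreatest
      {μ : ℝ | ∃ v : Fin n → ℝ, v ≠ 0 ∧ (G.adjMatrix ℝ).mulVec v = μ • v} lam1) :
    Summable (fun ξ : Fin n → ℕ =>
        ((Finset.univ.filter (fun i => 0 < ξ i)).card : ℝ) * Real.exp (W G α β ξ))
      ↔ α < 0 ∧ α + β * lam1 < 0 := by
  change Summable (zTerm G α β) ↔ _
  refine ⟨fun hs => ?_, fun ⟨hα, hγ⟩ => summable_zTerm G hlam.2 hα hγ⟩
  obtain ⟨v, hv, -⟩ := hlam.1
  obtain ⟨i, -⟩ := Function.ne_iff.1 hv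
  have hα : α < 0 := not_le.1 fun hα => not_summable_zTerm_of_nonneg G hα β i hs
  exact ⟨hα, not_le.1 fun hγ => not_summable_zTerm_of_nonneg_add G hlam hα hγ hs⟩

/-- `Ẑ_{α,β,G} = 2 Σ_ξ |{i : ξᵢ > 0}| e^{W(ξ)} < ∞` iff `α < 0` and `α + β λ₁(G) < 0`,
i.e. `ξ ↦ |{i : ξᵢ > 0}| e^{W(ξ)}` is summable iff `α < 0` and `α + β λ₁(G) < 0`. -/
theorem stmt3 {n : ℕ} (hn : 0 < n) (G : SimpleGraph (Fin n)) [DecidableRel G.Adj]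
    (α β : ℝ) (lam1 : ℝ)
    (hlam : IsGreatest
      {μ : ℝ | ∃ v : Fin n → ℝ, v ≠ 0 ∧ (G.adjMatrix ℝ).mulVec v = μ • v} lam1) :
    Summable (fun ξ : Fin n → ℕ =>
        ((Finset.univ.filter (fun i => 0 < ξ i)).card : ℝ) * Real.exp (W G α β ξ))
      ↔ α < 0 ∧ α + β * lam1 < 0 :=
  stmt3_general G α β lam1 hlam
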